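/- Let N, M ≥ 2 be integers, P > 0, α > 0, and let I(θ) be the 4×4 Fisher information matrix with entries [I(θ)]_{jk} = 2 Re Σ_{n=0}^{N−1} Σ_{m=0}^{M−1} conj(∂s_{n,m}/∂θ_j)·(∂s_{n,m}/∂θ_k), where s_{n,m}(θ) = √P·α·exp(i(φ + 2πnf − 2πmt)) and θ = (α, φ, f, t). Then I(θ) is invertible and the (t,t) diagonal entry of its inverse, i.e., the Cramér-Rao lower bound on the variance of any unbiased estimator of the normalized delay t, equals [I(θ)⁻¹]_{tt} = 6 / ((2π)² α² P · N M (M² − 1)). -/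

import Mathlib

/-!
Write `s = √P α e^{iψ}` with phase `ψ = φ + 2πnf − 2πmt`. Every partial derivative is
`√P (∂α + iα ∂ψ) e^{iψ}`, so the unit phasor cancels in `conj(∂_j s) ∂_k s`, and the Fisher
matrix is `2P Σ_{n,m} (∂_jα ∂_kα + α² ∂_jψ ∂_kψ)`. The amplitude decouples from the other
parameters, and the remaining block is `2Pα²` times a moment matrix of the grid
`{0,…,N-1} × {0,…,M-1}`. Its determinant factors through the discrete variances
`K Σk² − (Σk)² = K²(K²−1)/12`, and Cramer's rule gives the `(t, t)` entry of the inverse.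
-/

open Real Finset

/-- The noiseless OFDM radar observation `s_{n,m}(α,φ,f,t) = √P·α·exp(i(φ + 2πnf − 2πmt))`. -/
noncomputable def ofdmSig (P : ℝ) (α φ f t : ℝ) (n m : ℕ) : ℂ :=
  (Real.sqrt P : ℂ) * (α : ℂ) *
    Complex.exp (Complex.I * ((φ : ℂ) + 2 * (π : ℂ) * (n : ℂ) * (f : ℂ)
      - 2 * (π : ℂ) * (m : ℂ) * (t : ℂ)))

/-- Partial derivative of `s_{n,m}` with respect to the `j`-th parameter of
`θ = (α, φ, f, t)`. -/
noncomputable def ofdmDs (P : ℝ) (α φ f t : ℝ) (j : Fin 4) (n m : ℕ) : ℂ :=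
  match j with
  | 0 => deriv (fun a : ℝ => ofdmSig P a φ f t n m) α
  | 1 => deriv (fun p : ℝ => ofdmSig P α p f t n m) φ
  | 2 => deriv (fun fr : ℝ => ofdmSig P α φ fr t n m) f
  | 3 => deriv (fun ti : ℝ => ofdmSig P α φ f ti n m) t

/-- The 4×4 Fisher information matrix
`[I(θ)]_{jk} = 2 Re Σ_{n,m} conj(∂s_{n,m}/∂θ_j)·(∂s_{n,m}/∂θ_k)`. -/
noncomputable def ofdmFisher (N M : ℕ) (P : ℝ) (α φ f t : ℝ) :
    Matrix (Fin 4) (Fin 4) ℝ :=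
  Matrix.of fun j k =>
    2 * (∑ n ∈ Finset.range N, ∑ m ∈ Finset.range M,
      (starRingEnd ℂ) (ofdmDs P α φ f t j n m) * ofdmDs P α φ f t k n m).re

open Complex (I)
open ComplexConjugate

theorem HasDerivAt.const_mul_cexp_I_mul {ψ : ℝ → ℂ} {ψ' : ℂ} {x : ℝ} (K : ℂ)
    (h : HasDerivAt ψ ψ' x) :
    HasDerivAt (fun y => K * Complex.exp (I * ψ y)) (K * (I * ψ') * Complex.exp (I * ψ x)) x :=
  (((h.const_mul I).cexp).const_mul K).congr_deriv (by ring)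

noncomputable def rangePowerSum (K k : ℕ) : ℝ := ∑ i ∈ range K, (i : ℝ) ^ k

theorem rangePowerSum_zero (K : ℕ) : rangePowerSum K 0 = K := by
  simp [rangePowerSum]

theorem rangePowerSum_one (K : ℕ) : rangePowerSum K 1 = K * (K - 1) / 2 := by
  induction K with
  | zero => simp [rangePowerSum]
  | succ k ih => rw [rangePowerSum, sum_range_succ, ← rangePowerSum, ih]; push_cast; ring

theorem rangePowerSum_two (K : ℕ) : rangePowerSum K 2 = K * (K - 1) * (2 * K - 1) / 6 := by
  induction K with
  | zero => simp [rangePowerSum]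
  | succ k ih => rw [rangePowerSum, sum_range_succ, ← rangePowerSum, ih]; push_cast; ring

theorem rangePowerSum_zero_mul_two_sub_sq (K : ℕ) :
    rangePowerSum K 0 * rangePowerSum K 2 - rangePowerSum K 1 ^ 2 = K ^ 2 * (K ^ 2 - 1) / 12 := by
  rw [rangePowerSum_zero, rangePowerSum_one, rangePowerSum_two]
  ring

section Bordered

variable {K : Type*} [Field K] (a p q r s u v : K)

theorem det_bordered_fin_four :
    (!![a, 0, 0, 0; 0, p, q, r; 0, q, s, u; 0, r, u, v]).det =
      a * (p * (s * v - u ^ 2) - q * (q * v - u * r) + r * (q * u - s * r)) := by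
  rw [Matrix.det_succ_row_zero, Fin.sum_univ_succ]
  simp only [Fin.isValue, Fin.coe_ofNat_eq_mod, Nat.zero_mod, pow_zero, Matrix.of_apply,
    Matrix.cons_val', Matrix.cons_val_zero, Matrix.cons_val_fin_one, one_mul, Fin.succAbove_zero,
    Matrix.det_fin_three, Matrix.submatrix_apply, Fin.succ_zero_eq_one, Matrix.cons_val_one,
    Fin.succ_one_eq_two, Matrix.cons_val, Fin.reduceSucc, Fin.val_succ, Matrix.cons_val_succ,
    Fin.succAbove, Fin.castSucc_zero, Fin.succ_pos, ↓reduceIte, Fin.castSucc_one, zero_mul,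
    Fin.reduceCastSucc, sub_self, mul_zero, add_zero, sum_const_zero]
  ring

theorem inv_bordered_fin_four_three_three (ha : a ≠ 0) :
    (!![a, 0, 0, 0; 0, p, q, r; 0, q, s, u; 0, r, u, v])⁻¹ 3 3 =
      (p * s - q ^ 2) / (p * (s * v - u ^ 2) - q * (q * v - u * r) + r * (q * u - s * r)) := by
  rw [Matrix.inv_def, Matrix.smul_apply, smul_eq_mul, Ring.inverse_eq_inv', det_bordered_fin_four,
    Matrix.adjugate_fin_succ_eq_det_submatrix, Matrix.det_fin_three]
  simp only [Fin.isValue, Fin.coe_ofNat_eq_mod, Nat.mod_succ, Matrix.submatrix_apply,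
    Fin.succAbove, Fin.castSucc_zero, Fin.reduceLT, ↓reduceIte, Matrix.of_apply, Matrix.cons_val',
    Matrix.cons_val_zero, Matrix.cons_val_fin_one, Fin.castSucc_one, Matrix.cons_val_one,
    Fin.reduceCastSucc, Matrix.cons_val, mul_zero, zero_mul, sub_zero, add_zero]
  field_simp
  ring

end Bordered

noncomputable def ofdmPhasor (φ f t : ℝ) (n m : ℕ) : ℂ :=
  Complex.exp (I * ((φ : ℂ) + 2 * (π : ℂ) * (n : ℂ) * (f : ℂ)
    - 2 * (π : ℂ) * (m : ℂ) * (t : ℂ)))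

-- `∂α/∂θ` and `∂ψ/∂θ`, where `θ = (α, φ, f, t)` and `ψ = φ + 2πnf − 2πmt`.
def ofdmAmplitudeGrad : Fin 4 → ℝ := ![1, 0, 0, 0]

noncomputable def ofdmPhaseGrad (n m : ℕ) : Fin 4 → ℝ := ![0, 1, 2 * π * n, -(2 * π * m)]

theorem conj_ofdmPhasor_mul_self (φ f t : ℝ) (n m : ℕ) :
    conj (ofdmPhasor φ f t n m) * ofdmPhasor φ f t n m = 1 := by
  have h : ofdmPhasor φ f t n m =
      Complex.exp ((φ + 2 * π * n * f - 2 * π * m * t : ℝ) * I) := by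
    rw [ofdmPhasor, mul_comm]; push_cast; rfl
  rw [← Complex.normSq_eq_conj_mul_self, Complex.normSq_eq_norm_sq, h,
    Complex.norm_exp_ofReal_mul_I]
  norm_num

theorem ofdmDs_eq (P α φ f t : ℝ) (j : Fin 4) (n m : ℕ) :
    ofdmDs P α φ f t j n m =
      √P * (ofdmAmplitudeGrad j + α * ofdmPhaseGrad n m j * I) * ofdmPhasor φ f t n m := by
  have hofReal : ∀ x : ℝ, HasDerivAt (fun y : ℝ => (y : ℂ)) 1 x := fun x =>
    (hasDerivAt_id x).ofReal_comp
  fin_cases j <;>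
    simp only [ofdmDs, ofdmSig, ofdmPhasor, ofdmAmplitudeGrad, ofdmPhaseGrad, Fin.zero_eta,
      Fin.mk_one, Fin.reduceFinMk, Matrix.cons_val, Matrix.cons_val_zero, Matrix.cons_val_one] <;>
    push_cast
  · rw [(((hofReal α).const_mul (√P : ℂ)).mul_const _).deriv]
    ring
  · rw [(HasDerivAt.const_mul_cexp_I_mul ((√P : ℂ) * α) (((hofReal φ).add_const
      (2 * (π : ℂ) * n * f)).sub_const (2 * (π : ℂ) * m * t))).deriv]
    ring
  · rw [(HasDerivAt.const_mul_cexp_I_mul ((√P : ℂ) * α) ((((hofReal f).const_mul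
      (2 * (π : ℂ) * n)).const_add (φ : ℂ)).sub_const (2 * (π : ℂ) * m * t))).deriv]
    ring
  · rw [(HasDerivAt.const_mul_cexp_I_mul ((√P : ℂ) * α) (((hofReal t).const_mul
      (2 * (π : ℂ) * m)).const_sub ((φ : ℂ) + 2 * (π : ℂ) * n * f))).deriv]
    ring

theorem re_conj_ofdmDs_mul_ofdmDs {P : ℝ} (hP : 0 ≤ P) (α φ f t : ℝ) (j k : Fin 4)
    (n m : ℕ) :
    (conj (ofdmDs P α φ f t j n m) * ofdmDs P α φ f t k n m).re =
      P * (ofdmAmplitudeGrad j * ofdmAmplitudeGrad k +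
        α ^ 2 * (ofdmPhaseGrad n m j * ofdmPhaseGrad n m k)) := by
  rw [ofdmDs_eq, ofdmDs_eq, map_mul,
    show ∀ a b E : ℂ, a * conj E * (b * E) = a * b * (conj E * E) from fun _ _ _ => by ring,
    conj_ofdmPhasor_mul_self, mul_one]
  simp only [map_mul, map_add, Complex.conj_ofReal, Complex.conj_I, Complex.mul_re, Complex.mul_im,
    Complex.add_re, Complex.add_im, Complex.neg_re, Complex.neg_im, Complex.ofReal_re,
    Complex.ofReal_im, Complex.I_re, Complex.I_im]
  linear_combination (ofdmAmplitudeGrad j * ofdmAmplitudeGrad k +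
    α ^ 2 * (ofdmPhaseGrad n m j * ofdmPhaseGrad n m k)) * Real.mul_self_sqrt hP

theorem ofdmFisher_apply {P : ℝ} (hP : 0 ≤ P) (N M : ℕ) (α φ f t : ℝ) (j k : Fin 4) :
    ofdmFisher N M P α φ f t j k = 2 * P * ∑ n ∈ range N, ∑ m ∈ range M,
      (ofdmAmplitudeGrad j * ofdmAmplitudeGrad k +
        α ^ 2 * (ofdmPhaseGrad n m j * ofdmPhaseGrad n m k)) := by
  simp only [ofdmFisher, Matrix.of_apply, Complex.re_sum, re_conj_ofdmDs_mul_ofdmDs hP, mul_sum,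
    mul_assoc]

theorem ofdmFisher_eq {P : ℝ} (hP : 0 ≤ P) (N M : ℕ) (α φ f t : ℝ) :
    ofdmFisher N M P α φ f t =
      !![2 * P * (rangePowerSum N 0 * rangePowerSum M 0), 0, 0, 0;
        0, 2 * P * α ^ 2 * (rangePowerSum N 0 * rangePowerSum M 0),
          2 * P * α ^ 2 * (2 * π * (rangePowerSum N 1 * rangePowerSum M 0)),
          -(2 * P * α ^ 2 * (2 * π * (rangePowerSum N 0 * rangePowerSum M 1)));
        0, 2 * P * α ^ 2 * (2 * π * (rangePowerSum N 1 * rangePowerSum M 0)),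
          2 * P * α ^ 2 * ((2 * π) ^ 2 * (rangePowerSum N 2 * rangePowerSum M 0)),
          -(2 * P * α ^ 2 * ((2 * π) ^ 2 * (rangePowerSum N 1 * rangePowerSum M 1)));
        0, -(2 * P * α ^ 2 * (2 * π * (rangePowerSum N 0 * rangePowerSum M 1))),
          -(2 * P * α ^ 2 * ((2 * π) ^ 2 * (rangePowerSum N 1 * rangePowerSum M 1))),
          2 * P * α ^ 2 * ((2 * π) ^ 2 * (rangePowerSum N 0 * rangePowerSum M 2))] := by
  ext j k
  rw [ofdmFisher_apply hP]
  fin_cases j <;> fin_cases k <;>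
    simp only [ofdmAmplitudeGrad, ofdmPhaseGrad, Matrix.of_apply, Matrix.cons_val', Matrix.cons_val,
      Matrix.cons_val_zero, Matrix.cons_val_one, Matrix.cons_val_fin_one, Fin.isValue,
      Fin.reduceFinMk, Fin.zero_eta, Fin.mk_one, rangePowerSum, sum_mul_sum] <;>
    simp only [mul_sum, ← sum_neg_distrib] <;>
    first
    | exact sum_congr rfl fun n _ => sum_congr rfl fun m _ => by ring
    | simp

theorem det_ofdmFisher {P : ℝ} (hP : 0 ≤ P) (N M : ℕ) (α φ f t : ℝ) :
    (ofdmFisher N M P α φ f t).det = 2 * P * (2 * P * α ^ 2) ^ 3 * (2 * π) ^ 4 * (N * M) ^ 2 *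
      (N ^ 2 * (N ^ 2 - 1) / 12) * (M ^ 2 * (M ^ 2 - 1) / 12) := by
  -- Read backwards, the closed forms make this a polynomial identity in the power sums.
  rw [ofdmFisher_eq hP, det_bordered_fin_four,
    ← rangePowerSum_zero_mul_two_sub_sq, ← rangePowerSum_zero_mul_two_sub_sq,
    ← rangePowerSum_zero N, ← rangePowerSum_zero M]
  ring

theorem ofdmFisher_inv_three_three {P : ℝ} (hP : 0 < P) {N M : ℕ} (hN : N ≠ 0) (hM : M ≠ 0)
    (α φ f t : ℝ) :
    (ofdmFisher N M P α φ f t)⁻¹ 3 3 =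
      (2 * P * α ^ 2) ^ 2 * (2 * π) ^ 2 * M ^ 2 * (N ^ 2 * (N ^ 2 - 1) / 12) /
        ((2 * P * α ^ 2) ^ 3 * (2 * π) ^ 4 * (N * M) *
          (N ^ 2 * (N ^ 2 - 1) / 12) * (M ^ 2 * (M ^ 2 - 1) / 12)) := by
  rw [ofdmFisher_eq hP.le, inv_bordered_fin_four_three_three _ _ _ _ _ _ _
      (by simp [rangePowerSum_zero, hP.ne', hN, hM]),
    ← rangePowerSum_zero_mul_two_sub_sq, ← rangePowerSum_zero_mul_two_sub_sq,
    ← rangePowerSum_zero N, ← rangePowerSum_zero M]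
  congr 1 <;> ring

/-- Cramér-Rao lower bound for the normalized delay `t` in OFDM radar with
constant envelope `A_{n,m} = √P`: the Fisher information matrix is invertible and
`[I(θ)⁻¹]_{tt} = 6 / ((2π)² α² P · N M (M² − 1))`. -/
theorem ofdm_crlb_delay
    (N M : ℕ) (hN : 2 ≤ N) (hM : 2 ≤ M) (P : ℝ) (hP : 0 < P)
    (α φ f t : ℝ) (hα : 0 < α) :
    IsUnit (ofdmFisher N M P α φ f t).det ∧
    (ofdmFisher N M P α φ f t)⁻¹ 3 3 =
      6 / ((2 * π) ^ 2 * α ^ 2 * P * N * M * ((M : ℝ) ^ 2 - 1)) := by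
  have hN' : (1 : ℝ) < N := by exact_mod_cast hN
  have hM' : (1 : ℝ) < M := by exact_mod_cast hM
  have hN2 : (0 : ℝ) < N ^ 2 - 1 := by nlinarith
  have hM2 : (0 : ℝ) < M ^ 2 - 1 := by nlinarith
  refine ⟨isUnit_iff_ne_zero.2 ?_, ?_⟩
  · rw [det_ofdmFisher hP.le]
    positivity
  · rw [ofdmFisher_inv_three_three hP (by omega) (by omega)]
    field_simp
    ring
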